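/- arXiv:2511.20025 — 2 statements merged into one kernel-verified Lean document; each statement's English description precedes it below -/
import Mathlib

section
/- For every function u in H^1((0,1),ℝ) with u(0) = 0, one has ∫₀¹ u(x)²/x² dx ≤ 4 ∫₀¹ u'(x)² dx. -/
/-!
On `[a, b]` with `a > 0`, the pointwise inequality `(u/x)² - 4u'² ≤ (-2u²/x)'`, which is
`(u/x - 2u')² ≥ 0`, integrates to `∫ₐᵇ u²/x² ≤ 4 ∫ₐᵇ u'² + 2u(a)²/a`. Since `u(0) = 0`,
Cauchy–Schwarz gives `u(a)²/a ≤ ∫₀ᵃ u'²`, so `∫ₐ¹ u²/x² ≤ 4 ∫₀¹ u'²` for every `a ∈ (0, 1)`, and the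
bound passes to `a → 0`.
-/

open MeasureTheory Set Filter Topology

theorem sq_intervalIntegral_le_mul_intervalIntegral_sq {f : ℝ → ℝ} {a b : ℝ} (hab : a < b)
    (hf : IntegrableOn f (Ioc a b)) (hf2 : IntegrableOn (fun x => f x ^ 2) (Ioc a b)) :
    (∫ x in a..b, f x) ^ 2 ≤ (b - a) * ∫ x in a..b, f x ^ 2 := by
  have hba : 0 < b - a := sub_pos.2 hab
  have hjensen := (even_two.convexOn_pow (𝕜 := ℝ)).map_set_average_le
    (continuous_pow 2).continuousOn isClosed_univ (by simp [hab]) measure_Ioc_lt_top.ne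
    (Eventually.of_forall fun _ => mem_univ _) hf hf2
  simp only [setAverage_eq, Real.volume_real_Ioc_of_le hab.le, smul_eq_mul,
    ← intervalIntegral.integral_of_le hab.le] at hjensen
  rwa [mul_pow, inv_pow, sq (b - a), mul_inv, mul_assoc, mul_le_mul_iff_right₀ (inv_pos.2 hba),
    inv_mul_le_iff₀ hba] at hjensen

theorem sq_sub_le_mul_intervalIntegral_deriv_sq {u : ℝ → ℝ} {a b : ℝ} (hab : a < b)
    (hu : ContinuousOn u (Icc a b)) (hdiff : ∀ x ∈ Ioo a b, DifferentiableAt ℝ u x)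
    (hd2 : IntegrableOn (fun x => deriv u x ^ 2) (Ioo a b)) :
    (u b - u a) ^ 2 ≤ (b - a) * ∫ x in a..b, deriv u x ^ 2 := by
  rw [← integrableOn_Ioc_iff_integrableOn_Ioo] at hd2
  have hd : IntegrableOn (deriv u) (Ioc a b) :=
    ((memLp_two_iff_integrable_sq (measurable_deriv u).aestronglyMeasurable).2 hd2).integrable
      one_le_two
  rw [← intervalIntegral.integral_eq_sub_of_hasDerivAt_of_le hab.le hu
    (fun x hx => (hdiff x hx).hasDerivAt)
    ((intervalIntegrable_iff_integrableOn_Ioc_of_le hab.le).2 hd)]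
  exact sq_intervalIntegral_le_mul_intervalIntegral_sq hab hd hd2

theorem intervalIntegral_sq_div_sq_le {u : ℝ → ℝ} {a b : ℝ} (ha : 0 < a) (hab : a ≤ b)
    (hu : ContinuousOn u (Icc a b)) (hdiff : ∀ x ∈ Ioo a b, DifferentiableAt ℝ u x)
    (hd2 : IntegrableOn (fun x => deriv u x ^ 2) (Ioo a b)) :
    ∫ x in a..b, u x ^ 2 / x ^ 2 ≤
      4 * (∫ x in a..b, deriv u x ^ 2) + 2 * (u a ^ 2 / a - u b ^ 2 / b) := by
  have hne : ∀ x ∈ Icc a b, x ≠ 0 := fun x hx => (ha.trans_le hx.1).ne'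
  have hq : IntegrableOn (fun x => u x ^ 2 / x ^ 2) (Icc a b) :=
    ((hu.pow 2).div (continuousOn_pow 2) fun x hx => pow_ne_zero 2 (hne x hx)).integrableOn_Icc
  rw [← integrableOn_Icc_iff_integrableOn_Ioo] at hd2
  have hg : ContinuousOn (fun y => -2 * (u y ^ 2 / y)) (Icc a b) :=
    continuousOn_const.mul ((hu.pow 2).div continuousOn_id hne)
  have hg' : ∀ x ∈ Ioo a b, HasDerivAt (fun y => -2 * (u y ^ 2 / y))
      (2 * (u x / x) ^ 2 - 4 * (u x / x) * deriv u x) x := by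
    intro x hx
    refine ((((hdiff x hx).hasDerivAt.fun_pow 2).fun_div (hasDerivAt_id' x)
      (ha.trans hx.1).ne').const_mul (-2)).congr_deriv ?_
    field_simp
    ring
  have hle : ∀ x ∈ Ioo a b,
      u x ^ 2 / x ^ 2 - 4 * deriv u x ^ 2 ≤ 2 * (u x / x) ^ 2 - 4 * (u x / x) * deriv u x := by
    intro x _
    rw [← div_pow]
    nlinarith [sq_nonneg (u x / x - 2 * deriv u x)]
  have key := intervalIntegral.integral_le_sub_of_hasDeriv_right_of_le hab hg
    (fun x hx => (hg' x hx).hasDerivWithinAt)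
    (φ := fun x => u x ^ 2 / x ^ 2 - 4 * deriv u x ^ 2) (hq.sub (hd2.const_mul 4)) hle
  rw [intervalIntegral.integral_sub ((intervalIntegrable_iff_integrableOn_Icc_of_le hab).2 hq)
    ((intervalIntegrable_iff_integrableOn_Icc_of_le hab).2 (hd2.const_mul 4)),
    intervalIntegral.integral_const_mul] at key
  linarith

theorem intervalIntegral_sq_div_sq_le_of_map_zero {u : ℝ → ℝ} {a b : ℝ} (ha : 0 < a) (hab : a ≤ b)
    (hu : ContinuousOn u (Icc 0 b)) (hdiff : ∀ x ∈ Ioo 0 b, DifferentiableAt ℝ u x)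
    (hu0 : u 0 = 0) (hd2 : IntegrableOn (fun x => deriv u x ^ 2) (Ioo 0 b)) :
    ∫ x in a..b, u x ^ 2 / x ^ 2 ≤ 4 * ∫ x in 0..b, deriv u x ^ 2 := by
  have hsub_right : Ioo a b ⊆ Ioo 0 b := Ioo_subset_Ioo_left ha.le
  have hsub_left : Ioo 0 a ⊆ Ioo 0 b := Ioo_subset_Ioo_right hab
  have htail := intervalIntegral_sq_div_sq_le ha hab (hu.mono (Icc_subset_Icc_left ha.le))
    (fun x hx => hdiff x (hsub_right hx)) (hd2.mono_set hsub_right)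
  have hhead := sq_sub_le_mul_intervalIntegral_deriv_sq ha
    (hu.mono (Icc_subset_Icc_right hab)) (fun x hx => hdiff x (hsub_left hx))
    (hd2.mono_set hsub_left)
  rw [hu0, sub_zero, sub_zero, ← div_le_iff₀' ha] at hhead
  have hd2' : IntervalIntegrable (fun x => deriv u x ^ 2) volume 0 b :=
    (intervalIntegrable_iff_integrableOn_Ioo_of_le (ha.le.trans hab)).2 hd2
  have ha' : a ∈ uIcc 0 b := mem_uIcc_of_le ha.le hab
  rw [← intervalIntegral.integral_add_adjacent_intervals
    (hd2'.mono_set (uIcc_subset_uIcc_left ha')) (hd2'.mono_set (uIcc_subset_uIcc_right ha'))]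
  have hhead_nonneg : 0 ≤ ∫ x in (0:ℝ)..a, deriv u x ^ 2 :=
    intervalIntegral.integral_nonneg ha.le fun x _ => sq_nonneg _
  linarith [div_nonneg (sq_nonneg (u b)) (ha.le.trans hab)]

theorem setIntegral_Ioo_le_of_forall_intervalIntegral_le {f : ℝ → ℝ} {a b C : ℝ} (hab : a < b)
    (hf : IntegrableOn f (Ioo a b)) (h : ∀ c ∈ Ioo a b, ∫ x in c..b, f x ≤ C) :
    ∫ x in Ioo a b, f x ≤ C := by
  rw [← integrableOn_Icc_iff_integrableOn_Ioo, ← uIcc_of_le hab.le] at hf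
  have hcont := intervalIntegral.continuousOn_primitive_interval_left hf
  rw [uIcc_of_le hab.le] at hcont
  have hlim := ((continuousWithinAt_Icc_iff_Ici hab).1 (hcont a (left_mem_Icc.2 hab.le))).mono
    Ioi_subset_Ici_self
  rw [← integral_Ioc_eq_integral_Ioo, ← intervalIntegral.integral_of_le hab.le]
  exact le_of_tendsto hlim (eventually_of_mem (Ioo_mem_nhdsGT hab) h)

/-- **Hardy inequality** on `(0,1)`: for every `u ∈ H¹((0,1),ℝ)` with `u(0) = 0`,
`∫₀¹ u(x)²/x² dx ≤ 4 ∫₀¹ u'(x)² dx`. -/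
theorem hardy_inequality (u : ℝ → ℝ)
    (hu_cont : ContinuousOn u (Icc 0 1))
    (hu_diff : ∀ x ∈ Ioo (0:ℝ) 1, DifferentiableAt ℝ u x)
    (hu0 : u 0 = 0)
    (hu_deriv_int : IntegrableOn (fun x => (deriv u x) ^ 2) (Ioo 0 1)) :
    ∫ x in Ioo (0:ℝ) 1, (u x) ^ 2 / x ^ 2 ≤ 4 * ∫ x in Ioo (0:ℝ) 1, (deriv u x) ^ 2 := by
  rw [← integral_Ioc_eq_integral_Ioo (f := fun x => deriv u x ^ 2),
    ← intervalIntegral.integral_of_le zero_le_one]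
  by_cases hq : IntegrableOn (fun x => u x ^ 2 / x ^ 2) (Ioo 0 1)
  · exact setIntegral_Ioo_le_of_forall_intervalIntegral_le zero_lt_one hq fun a ha =>
      intervalIntegral_sq_div_sq_le_of_map_zero ha.1 ha.2.le hu_cont hu_diff hu0 hu_deriv_int
  · rw [integral_undef hq]
    exact mul_nonneg zero_le_four
      (intervalIntegral.integral_nonneg zero_le_one fun x _ => sq_nonneg _)
end

section
/- For every n ∈ ℕ and every real ν > -1, ∫₀^∞ e^{-r} r^ν (L_n^{(ν)}(r))² dr = Γ(ν + n + 1) / n!. -/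
/-!
Expand one factor of `L_n²` in monomials, `L_n = ∑_j a_j r^j`: then
`∫ e^{-r} r^ν L_n² = ∑_j a_j ∫ e^{-r} r^{ν+j} L_n`. By the Gamma integral,
`∫ e^{-r} r^{ν+j} L_n = Γ(ν+n+1)/n! · ∑_k (-1)^k C(n,k) (ν+k+1)_j` with `(x)_j` the rising
factorial, which is `(-1)^n` times the `n`-th forward difference at `0` of the monic degree-`j`
polynomial `k ↦ (ν+k+1)_j`. It vanishes for `j < n` (orthogonality) and equals `(-1)^n n!` for
`j = n`; since `a_n = (-1)^n / n!`, only the term `j = n` survives and gives `Γ(ν+n+1)/n!`.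
-/

open MeasureTheory Set

/-- The generalized Laguerre polynomial
`L_n^{(ν)}(r) = ∑_{j=0}^n (-1)^j binom(n+ν, n-j) r^j / j!`. -/
noncomputable def laguerreL (n : ℕ) (ν r : ℝ) : ℝ :=
  ∑ j ∈ Finset.range (n + 1),
    (-1 : ℝ) ^ j * ((∏ i ∈ Finset.range (n - j), (ν + j + 1 + i)) / ((n - j).factorial : ℝ))
      * r ^ j / (j.factorial : ℝ)

open Finset Polynomial Nat

section AlternatingSum

variable {R : Type*} [CommRing R]

theorem Polynomial.sum_neg_one_pow_mul_choose_mul_eval (P : R[X]) (n : ℕ) :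
    ∑ k ∈ range (n + 1), (-1) ^ k * (n.choose k : R) * P.eval (k : R)
      = (-1) ^ n * (fwdDiff 1)^[n] (fun x ↦ P.eval x) 0 := by
  rw [fwdDiff_iter_eq_sum_shift, mul_sum]
  refine sum_congr rfl fun k hk ↦ ?_
  have hsign : (-1 : R) ^ n * (-1) ^ (n - k) = (-1) ^ k := by
    rw [← pow_add, show n + (n - k) = k + 2 * (n - k) by grind, pow_add, pow_mul]
    simp
  rw [zsmul_eq_mul, zero_add, nsmul_one]
  push_cast
  linear_combination (n.choose k : R) * P.eval (k : R) * hsign.symm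

theorem Polynomial.sum_neg_one_pow_mul_choose_mul_eval_eq_zero {P : R[X]} {n : ℕ}
    (hP : P.natDegree < n) :
    ∑ k ∈ range (n + 1), (-1) ^ k * (n.choose k : R) * P.eval (k : R) = 0 := by
  simp [P.sum_neg_one_pow_mul_choose_mul_eval, fwdDiff_iter_eq_zero_of_degree_lt hP]

theorem Polynomial.Monic.sum_neg_one_pow_mul_choose_mul_eval {P : R[X]} (hP : P.Monic) :
    ∑ k ∈ range (P.natDegree + 1), (-1) ^ k * (P.natDegree.choose k : R) * P.eval (k : R)
      = (-1) ^ P.natDegree * P.natDegree ! := by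
  simp [P.sum_neg_one_pow_mul_choose_mul_eval, fwdDiff_iter_degree_eq_factorial, hP.leadingCoeff]

variable [Nontrivial R]

theorem Polynomial.natDegree_prod_X_add_C (c : R) (j : ℕ) :
    (∏ i ∈ range j, (X + C (c + i))).natDegree = j := by
  rw [natDegree_prod_of_monic _ _ fun _ _ ↦ monic_X_add_C _]
  simp only [natDegree_X_add_C, sum_const, card_range, smul_eq_mul, mul_one]

theorem sum_neg_one_pow_mul_choose_mul_prod_add_eq_zero (c : R) {j n : ℕ} (hj : j < n) :
    ∑ k ∈ range (n + 1), (-1) ^ k * (n.choose k : R) * ∏ i ∈ range j, ((k : R) + c + i)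
      = 0 := by
  simpa [eval_prod, add_assoc] using
    sum_neg_one_pow_mul_choose_mul_eval_eq_zero ((natDegree_prod_X_add_C c j).trans_lt hj)

theorem sum_neg_one_pow_mul_choose_mul_prod_add_self (c : R) (n : ℕ) :
    ∑ k ∈ range (n + 1), (-1) ^ k * (n.choose k : R) * ∏ i ∈ range n, ((k : R) + c + i)
      = (-1) ^ n * n ! := by
  have h := (monic_prod_of_monic (range n) _ fun i _ ↦ monic_X_add_C (c + i)
    ).sum_neg_one_pow_mul_choose_mul_eval
  rw [natDegree_prod_X_add_C] at h
  simpa [eval_prod, add_assoc] using h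

end AlternatingSum

theorem Real.Gamma_add_nat_eq_mul_prod {x : ℝ} (hx : 0 < x) (m : ℕ) :
    Real.Gamma (x + m) = Real.Gamma x * ∏ i ∈ range m, (x + i) := by
  induction m with
  | zero => simp
  | succ m ih =>
    rw [Nat.cast_succ, ← add_assoc, Real.Gamma_add_one (by positivity), ih, prod_range_succ]
    ring

theorem eqOn_exp_neg_mul_rpow_add_nat (s : ℝ) (m : ℕ) :
    EqOn (fun r ↦ Real.exp (-r) * r ^ (s + m + 1 - 1)) (fun r ↦ Real.exp (-r) * r ^ s * r ^ m)
      (Ioi 0) := fun r (hr : 0 < r) ↦ by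
  simp only [add_sub_cancel_right, Real.rpow_add hr, Real.rpow_natCast, mul_assoc]

theorem integrableOn_exp_neg_mul_rpow_mul_pow {s : ℝ} (hs : -1 < s) (m : ℕ) :
    IntegrableOn (fun r ↦ Real.exp (-r) * r ^ s * r ^ m) (Ioi 0) :=
  (Real.GammaIntegral_convergent (by linarith [m.cast_nonneg (α := ℝ)])).congr_fun
    (eqOn_exp_neg_mul_rpow_add_nat s m) measurableSet_Ioi

theorem integral_exp_neg_mul_rpow_mul_pow {s : ℝ} (hs : -1 < s) (m : ℕ) :
    ∫ r in Ioi 0, Real.exp (-r) * r ^ s * r ^ m = Real.Gamma (s + m + 1) := by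
  rw [Real.Gamma_eq_integral (by linarith [m.cast_nonneg (α := ℝ)])]
  exact (setIntegral_congr_fun measurableSet_Ioi (eqOn_exp_neg_mul_rpow_add_nat s m)).symm

noncomputable def laguerreCoeff (n : ℕ) (ν : ℝ) (j : ℕ) : ℝ :=
  (-1) ^ j * (∏ i ∈ range (n - j), (ν + j + 1 + i)) / ((n - j)! * j !)

theorem laguerreL_eq_sum_laguerreCoeff_mul_pow (n : ℕ) (ν r : ℝ) :
    laguerreL n ν r = ∑ j ∈ range (n + 1), laguerreCoeff n ν j * r ^ j :=
  sum_congr rfl fun j _ ↦ by rw [laguerreCoeff]; ring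

theorem laguerreCoeff_self (n : ℕ) (ν : ℝ) : laguerreCoeff n ν n = (-1) ^ n / n ! := by
  simp [laguerreCoeff]

theorem laguerreCoeff_mul_Gamma {ν : ℝ} (hν : -1 < ν) {n j : ℕ} (hj : j ≤ n) :
    laguerreCoeff n ν j * Real.Gamma (ν + j + 1)
      = (-1) ^ j * n.choose j * (Real.Gamma (ν + n + 1) / n !) := by
  have hΓ : Real.Gamma (ν + n + 1)
      = Real.Gamma (ν + j + 1) * ∏ i ∈ range (n - j), (ν + j + 1 + i) := by
    rw [← Real.Gamma_add_nat_eq_mul_prod (by linarith [j.cast_nonneg (α := ℝ)]),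
      Nat.cast_sub hj]
    ring_nf
  rw [hΓ, Nat.cast_choose ℝ hj, laguerreCoeff]
  field_simp

theorem exp_neg_mul_rpow_mul_pow_mul_laguerreL (n j : ℕ) (ν r : ℝ) :
    Real.exp (-r) * r ^ ν * r ^ j * laguerreL n ν r
      = ∑ k ∈ range (n + 1), laguerreCoeff n ν k * (Real.exp (-r) * r ^ ν * r ^ (j + k)) := by
  rw [laguerreL_eq_sum_laguerreCoeff_mul_pow, mul_sum]
  exact sum_congr rfl fun k _ ↦ by ring

theorem integrableOn_exp_neg_mul_rpow_mul_pow_mul_laguerreL {ν : ℝ} (hν : -1 < ν) (n j : ℕ) :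
    IntegrableOn (fun r ↦ Real.exp (-r) * r ^ ν * r ^ j * laguerreL n ν r) (Ioi 0) := by
  simp_rw [exp_neg_mul_rpow_mul_pow_mul_laguerreL]
  exact integrable_finsetSum _ fun k _ ↦
    (integrableOn_exp_neg_mul_rpow_mul_pow hν (j + k)).const_mul _

theorem integral_exp_neg_mul_rpow_mul_pow_mul_laguerreL {ν : ℝ} (hν : -1 < ν) (n j : ℕ) :
    ∫ r in Ioi 0, Real.exp (-r) * r ^ ν * r ^ j * laguerreL n ν r
      = Real.Gamma (ν + n + 1) / n ! * ∑ k ∈ range (n + 1),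
          (-1) ^ k * (n.choose k : ℝ) * ∏ i ∈ range j, ((k : ℝ) + (ν + 1) + i) := by
  simp_rw [exp_neg_mul_rpow_mul_pow_mul_laguerreL]
  rw [integral_finsetSum _ fun k _ ↦
    (integrableOn_exp_neg_mul_rpow_mul_pow hν (j + k)).const_mul _, mul_sum]
  refine sum_congr rfl fun k hk ↦ ?_
  rw [integral_const_mul, integral_exp_neg_mul_rpow_mul_pow hν,
    show ν + (j + k : ℕ) + 1 = k + (ν + 1) + j by push_cast; ring,
    Real.Gamma_add_nat_eq_mul_prod (by linarith [k.cast_nonneg (α := ℝ)]),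
    show (k : ℝ) + (ν + 1) = ν + k + 1 by ring, ← mul_assoc,
    laguerreCoeff_mul_Gamma hν (Nat.lt_succ_iff.1 (mem_range.1 hk))]
  ring

theorem integral_exp_neg_mul_rpow_mul_pow_mul_laguerreL_of_lt {ν : ℝ} (hν : -1 < ν) {n j : ℕ}
    (hj : j < n) : ∫ r in Ioi 0, Real.exp (-r) * r ^ ν * r ^ j * laguerreL n ν r = 0 := by
  rw [integral_exp_neg_mul_rpow_mul_pow_mul_laguerreL hν,
    sum_neg_one_pow_mul_choose_mul_prod_add_eq_zero _ hj, mul_zero]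

theorem integral_exp_neg_mul_rpow_mul_pow_self_mul_laguerreL {ν : ℝ} (hν : -1 < ν) (n : ℕ) :
    ∫ r in Ioi 0, Real.exp (-r) * r ^ ν * r ^ n * laguerreL n ν r
      = (-1) ^ n * Real.Gamma (ν + n + 1) := by
  rw [integral_exp_neg_mul_rpow_mul_pow_mul_laguerreL hν,
    sum_neg_one_pow_mul_choose_mul_prod_add_self]
  field_simp

/-- Orthogonality norm: `∫₀^∞ e^{-r} r^ν (L_n^{(ν)}(r))² dr = Γ(ν+n+1)/n!`. -/
theorem laguerre_norm (n : ℕ) (ν : ℝ) (hν : -1 < ν) :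
    ∫ r in Ioi (0:ℝ), Real.exp (-r) * r ^ ν * (laguerreL n ν r) ^ 2
      = Real.Gamma (ν + n + 1) / (n.factorial : ℝ) := by
  have hsq : ∀ r : ℝ, Real.exp (-r) * r ^ ν * laguerreL n ν r ^ 2 = ∑ j ∈ range (n + 1),
      laguerreCoeff n ν j * (Real.exp (-r) * r ^ ν * r ^ j * laguerreL n ν r) := fun r ↦ by
    nth_rw 1 [sq, laguerreL_eq_sum_laguerreCoeff_mul_pow n ν r]
    rw [sum_mul, mul_sum]
    exact sum_congr rfl fun j _ ↦ by ring
  simp_rw [hsq]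
  rw [integral_finsetSum _ fun j _ ↦
    (integrableOn_exp_neg_mul_rpow_mul_pow_mul_laguerreL hν n j).const_mul _]
  simp_rw [integral_const_mul]
  rw [sum_eq_single_of_mem n (self_mem_range_succ n) fun j hj hjn ↦ by
      rw [integral_exp_neg_mul_rpow_mul_pow_mul_laguerreL_of_lt hν
        ((mem_range_succ_iff.1 hj).lt_of_ne hjn), mul_zero],
    integral_exp_neg_mul_rpow_mul_pow_self_mul_laguerreL hν, laguerreCoeff_self,
    div_mul_eq_mul_div, ← mul_assoc, ← mul_pow]
  norm_num
end
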